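/- arXiv:1707.09954 — 2 statements merged into one kernel-verified Lean document; each statement's English description precedes it below -/
import Mathlib

section
/- Let α > 0, β > 0 and γ ≠ 0, and set c = 36α²/(169β). Then the profile φ(ξ) = (105α²/(169γβ)) · sech⁴( (1/2)√(α/(13β)) ξ ) satisfies the fourth-order ordinary differential equation −c φ + (γ/2) φ² + α φ″ − β φ⁗ = 0 on ℝ. -/
/-!
Write `s = sech`. Since `s' = -s tanh` and `tanh² = 1 - s²`, every power of `s` satisfies
`(sⁿ)'' = n² sⁿ - n(n+1) sⁿ⁺²`, so `(s⁴)'' = 16 s⁴ - 20 s⁶` and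
`(s⁴)⁗ = 256 s⁴ - 1040 s⁶ + 840 s⁸`. Rescaling `ξ ↦ kξ` multiplies the `j`-th derivative by `kʲ`,
and the ODE becomes a polynomial identity in `s` whose coefficients of `s⁴, s⁶, s⁸` vanish
for the given `c`, `k² = α/(52β)` and amplitude.
-/

open Real

lemma contDiff_inv_cosh_pow {N : WithTop ℕ∞} (n : ℕ) :
    ContDiff ℝ N fun x => (cosh x)⁻¹ ^ n :=
  (contDiff_cosh.inv fun x => (cosh_pos x).ne').pow n

lemma hasDerivAt_inv_cosh_pow (n : ℕ) (x : ℝ) :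
    HasDerivAt (fun x => (cosh x)⁻¹ ^ n) (-n * (sinh x * (cosh x)⁻¹ ^ (n + 1))) x := by
  rcases n with _ | m
  · simpa using hasDerivAt_const x (1 : ℝ)
  · have hc := (cosh_pos x).ne'
    refine (((hasDerivAt_cosh x).inv hc).fun_pow (m + 1)).congr_deriv ?_
    rw [Nat.add_sub_cancel, Pi.inv_apply, div_eq_mul_inv, ← inv_pow]
    push_cast
    ring

lemma hasDerivAt_sinh_mul_inv_cosh_pow (n : ℕ) (x : ℝ) :
    HasDerivAt (fun x => sinh x * (cosh x)⁻¹ ^ (n + 1))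
      ((n + 1) * (cosh x)⁻¹ ^ (n + 2) - n * (cosh x)⁻¹ ^ n) x := by
  refine ((hasDerivAt_sinh x).mul (hasDerivAt_inv_cosh_pow (n + 1) x)).congr_deriv ?_
  have hs : cosh x * (cosh x)⁻¹ = 1 := mul_inv_cancel₀ (cosh_pos x).ne'
  push_cast
  linear_combination (-(n + 1) * (cosh x)⁻¹ ^ (n + 2)) * sinh_sq x
    + (cosh x)⁻¹ ^ n * (-(n + 1) * cosh x * (cosh x)⁻¹ - n) * hs

lemma iteratedDeriv_two_inv_cosh_pow (n : ℕ) :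
    iteratedDeriv 2 (fun x => (cosh x)⁻¹ ^ n) =
      fun x => n ^ 2 * (cosh x)⁻¹ ^ n - n * (n + 1) * (cosh x)⁻¹ ^ (n + 2) := by
  have h1 : deriv (fun x => (cosh x)⁻¹ ^ n) =
      fun x => -n * (sinh x * (cosh x)⁻¹ ^ (n + 1)) :=
    funext fun x => (hasDerivAt_inv_cosh_pow n x).deriv
  rw [iteratedDeriv_succ, iteratedDeriv_one, h1]
  funext x
  rw [((hasDerivAt_sinh_mul_inv_cosh_pow n x).const_mul (-(n : ℝ))).deriv]
  ring

lemma iteratedDeriv_four_inv_cosh_pow_four :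
    iteratedDeriv 4 (fun x => (cosh x)⁻¹ ^ 4) =
      fun x => 256 * (cosh x)⁻¹ ^ 4 - 1040 * (cosh x)⁻¹ ^ 6 + 840 * (cosh x)⁻¹ ^ 8 := by
  rw [iteratedDeriv_eq_iterate, show deriv^[4] = deriv^[2] ∘ deriv^[2] from rfl,
    Function.comp_apply, ← iteratedDeriv_eq_iterate, ← iteratedDeriv_eq_iterate,
    iteratedDeriv_two_inv_cosh_pow]
  funext x
  rw [iteratedDeriv_fun_sub (contDiff_const.mul (contDiff_inv_cosh_pow _)).contDiffAt
      (contDiff_const.mul (contDiff_inv_cosh_pow _)).contDiffAt,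
    iteratedDeriv_const_mul_field, iteratedDeriv_const_mul_field,
    iteratedDeriv_two_inv_cosh_pow, iteratedDeriv_two_inv_cosh_pow]
  push_cast
  ring

lemma iteratedDeriv_const_mul_comp_const_mul (A k : ℝ) {f : ℝ → ℝ} {n : ℕ}
    (hf : ContDiff ℝ n f) (x : ℝ) :
    iteratedDeriv n (fun x => A * f (k * x)) x = A * k ^ n * iteratedDeriv n f (k * x) := by
  rw [iteratedDeriv_const_mul_field, congrFun (iteratedDeriv_comp_const_smul hf k) x, smul_eq_mul,
    mul_assoc]

/-- For `α > 0`, `β > 0`, `γ ≠ 0` and `c = 36α²/(169β)`, the profile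
`φ(ξ) = (105α²/(169γβ)) sech⁴((1/2)√(α/(13β)) ξ)` satisfies the fourth-order ODE
`−c φ + (γ/2) φ² + α φ″ − β φ⁗ = 0` on `ℝ`. -/
theorem fifth_order_kdv_traveling_wave_ode
    (α β γ : ℝ) (hα : 0 < α) (hβ : 0 < β) (hγ : γ ≠ 0)
    (c : ℝ) (hc : c = 36 * α ^ 2 / (169 * β))
    (φ : ℝ → ℝ)
    (hφ : ∀ ξ : ℝ, φ ξ =
      105 * α ^ 2 / (169 * γ * β) *
        (1 / Real.cosh ((1 / 2) * Real.sqrt (α / (13 * β)) * ξ)) ^ 4) :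
    ∀ ξ : ℝ,
      -c * φ ξ + γ / 2 * φ ξ ^ 2 + α * iteratedDeriv 2 φ ξ
        - β * iteratedDeriv 4 φ ξ = 0 := by
  intro ξ
  set k := (1 / 2) * √(α / (13 * β))
  have hk : k ^ 2 = α / (52 * β) := by
    rw [mul_pow, sq_sqrt (by positivity)]
    ring
  have hφ' : φ = fun ξ => 105 * α ^ 2 / (169 * γ * β) * (fun x => (cosh x)⁻¹ ^ 4) (k * ξ) :=
    funext fun ξ => by rw [hφ, one_div]
  rw [hφ', iteratedDeriv_const_mul_comp_const_mul _ _ (contDiff_inv_cosh_pow 4),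
    iteratedDeriv_const_mul_comp_const_mul _ _ (contDiff_inv_cosh_pow 4),
    iteratedDeriv_two_inv_cosh_pow, iteratedDeriv_four_inv_cosh_pow_four,
    show k ^ 4 = (k ^ 2) ^ 2 by ring, hk, hc]
  beta_reduce
  generalize (cosh (k * ξ))⁻¹ = s
  field_simp
  ring
end

section
/- For each integer j ≥ 0 define b_j = 1680 (2j + 11/2) (j+1)² (j + 9/2)² (2j)! / ( [ (2j+4)(2j+5)(2j+6)(2j+7) − 1680 ] · (2j+10)! ). Then b_0 = −(11/10!)(81/4) < 0, the series Σ_{j=0}^∞ b_j converges, and its sum is strictly negative. -/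
/-!
At `j = 0` the quartic factor `(2j+4)(2j+5)(2j+6)(2j+7) - 1680` equals `-840`, so
`b₀ = -891/14515200 ≈ -6.1·10⁻⁵`; for `j ≥ 1` it is positive, and so is `b_j`.
Cancelling `(2j)!` against `(2j+10)!` leaves a rational function of degree `-9`, and already the
crude bound `b_{j+1} ≤ 1/(5000 (j+4)(j+5))` gives a telescoping majorant of the tail with sum
`1/20000 < |b₀|`.
-/

open Filter Topology Finset
open scoped Nat

theorem Antitone.hasSum_sub_succ {f : ℕ → ℝ} (hf : Antitone f) (hlim : Tendsto f atTop (𝓝 0)) :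
    HasSum (fun n ↦ f n - f (n + 1)) (f 0) := by
  refine (hasSum_iff_tendsto_nat_of_nonneg (fun n ↦ sub_nonneg.2 (hf n.le_succ)) _).2 ?_
  simp_rw [sum_range_sub']
  simpa using tendsto_const_nhds.sub hlim

theorem Nat.factorial_add_eq_mul_prod (n k : ℕ) :
    (n + k)! = n ! * ∏ i ∈ range k, (n + 1 + i) := by
  rw [← factorial_mul_ascFactorial, ascFactorial_eq_prod_range]

noncomputable def gegenbauerTerm (j : ℕ) : ℝ :=
  1680 * (2 * (j : ℝ) + 11 / 2) * ((j : ℝ) + 1) ^ 2 * ((j : ℝ) + 9 / 2) ^ 2 * ((2 * j)! : ℝ) /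
    (((2 * (j : ℝ) + 4) * (2 * (j : ℝ) + 5) * (2 * (j : ℝ) + 6) * (2 * (j : ℝ) + 7) - 1680) *
      ((2 * j + 10)! : ℝ))

noncomputable def gegenbauerRatio (x : ℝ) : ℝ :=
  1680 * (2 * x + 11 / 2) * (x + 1) ^ 2 * (x + 9 / 2) ^ 2 /
    (((2 * x + 4) * (2 * x + 5) * (2 * x + 6) * (2 * x + 7) - 1680) *
      ∏ i ∈ range 10, (2 * x + 1 + i))

theorem gegenbauerTerm_eq_ratio (j : ℕ) : gegenbauerTerm j = gegenbauerRatio j := by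
  have hfac : ((2 * j)! : ℝ) ≠ 0 := by positivity
  rw [gegenbauerTerm, gegenbauerRatio, Nat.factorial_add_eq_mul_prod, Nat.cast_mul,
    mul_left_comm _ ((2 * j)! : ℝ), mul_comm _ ((2 * j)! : ℝ), mul_div_mul_left _ _ hfac]
  push_cast
  rfl

theorem gegenbauerTerm_zero : gegenbauerTerm 0 = -(11 / (10 ! : ℝ) * (81 / 4)) := by
  norm_num [gegenbauerTerm, Nat.factorial]

section RatioBounds

variable {y : ℝ}

theorem gegenbauerRatio_add_one_denom_pos (hy : 0 ≤ y) :
    0 < ((2 * (y + 1) + 4) * (2 * (y + 1) + 5) * (2 * (y + 1) + 6) * (2 * (y + 1) + 7) - 1680) *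
      ∏ i ∈ range 10, (2 * (y + 1) + 1 + i) := by
  simp only [prod_range_succ, prod_range_zero]
  push_cast
  ring_nf
  positivity

theorem gegenbauerRatio_add_one_nonneg (hy : 0 ≤ y) : 0 ≤ gegenbauerRatio (y + 1) :=
  div_nonneg (by positivity) (gegenbauerRatio_add_one_denom_pos hy).le

theorem gegenbauerRatio_add_one_le (hy : 0 ≤ y) :
    gegenbauerRatio (y + 1) ≤ 1 / (5000 * (y + 4) * (y + 5)) := by
  rw [gegenbauerRatio, div_le_div_iff₀ (gegenbauerRatio_add_one_denom_pos hy) (by positivity),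
    ← sub_nonneg]
  -- in the shifted variable `y` every coefficient of the difference is positive
  simp only [prod_range_succ, prod_range_zero]
  push_cast
  ring_nf
  positivity

end RatioBounds

theorem hasSum_one_div_mul_add_four_mul_add_five :
    HasSum (fun n : ℕ ↦ 1 / (5000 * ((n : ℝ) + 4) * ((n : ℝ) + 5))) (1 / 20000) := by
  have hf : Antitone fun n : ℕ ↦ 1 / (5000 * ((n : ℝ) + 4)) := fun m n h ↦ by dsimp only; gcongr
  have hlim : Tendsto (fun n : ℕ ↦ 1 / (5000 * ((n : ℝ) + 4))) atTop (𝓝 0) :=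
    tendsto_const_nhds.div_atTop <| (tendsto_atTop_add_const_right _ 4
      tendsto_natCast_atTop_atTop).const_mul_atTop (by norm_num)
  convert hf.hasSum_sub_succ hlim using 1
  · ext n
    push_cast
    field_simp
    ring
  · norm_num


theorem gegenbauerTerm_succ_nonneg (j : ℕ) : 0 ≤ gegenbauerTerm (j + 1) := by
  rw [gegenbauerTerm_eq_ratio, Nat.cast_succ]
  exact gegenbauerRatio_add_one_nonneg j.cast_nonneg

theorem gegenbauerTerm_succ_le (j : ℕ) :
    gegenbauerTerm (j + 1) ≤ 1 / (5000 * ((j : ℝ) + 4) * ((j : ℝ) + 5)) := by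
  rw [gegenbauerTerm_eq_ratio, Nat.cast_succ]
  exact gegenbauerRatio_add_one_le j.cast_nonneg

theorem summable_gegenbauerTerm_succ : Summable fun j ↦ gegenbauerTerm (j + 1) :=
  hasSum_one_div_mul_add_four_mul_add_five.summable.of_nonneg_of_le gegenbauerTerm_succ_nonneg
    gegenbauerTerm_succ_le

theorem summable_gegenbauerTerm : Summable gegenbauerTerm :=
  (summable_nat_add_iff 1).mp summable_gegenbauerTerm_succ

theorem tsum_gegenbauerTerm_succ_le : ∑' j, gegenbauerTerm (j + 1) ≤ 1 / 20000 :=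
  hasSum_one_div_mul_add_four_mul_add_five.tsum_eq ▸
    summable_gegenbauerTerm_succ.tsum_le_tsum gegenbauerTerm_succ_le
      hasSum_one_div_mul_add_four_mul_add_five.summable

theorem tsum_gegenbauerTerm_neg : ∑' j, gegenbauerTerm j < 0 := by
  have htail := tsum_gegenbauerTerm_succ_le
  rw [summable_gegenbauerTerm.tsum_eq_zero_add, gegenbauerTerm_zero]
  norm_num [Nat.factorial]
  linarith

/-- With
`b_j = 1680 (2j+11/2)(j+1)²(j+9/2)² (2j)! / ([(2j+4)(2j+5)(2j+6)(2j+7) − 1680] (2j+10)!)`,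
one has `b_0 = −(11/10!)(81/4) < 0`, the series `Σ_{j≥0} b_j` converges, and its
sum is strictly negative. -/
theorem gegenbauer_series_sum_negative
    (b : ℕ → ℝ)
    (hb : ∀ j : ℕ, b j =
      1680 * (2 * (j : ℝ) + 11 / 2) * ((j : ℝ) + 1) ^ 2 * ((j : ℝ) + 9 / 2) ^ 2
          * (Nat.factorial (2 * j) : ℝ) /
        (((2 * (j : ℝ) + 4) * (2 * (j : ℝ) + 5) * (2 * (j : ℝ) + 6)
            * (2 * (j : ℝ) + 7) - 1680) * (Nat.factorial (2 * j + 10) : ℝ))) :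
    b 0 = -(11 / (Nat.factorial 10 : ℝ) * (81 / 4))
      ∧ b 0 < 0
      ∧ Summable b
      ∧ ∑' j : ℕ, b j < 0 := by
  obtain rfl : b = gegenbauerTerm := funext hb
  exact ⟨gegenbauerTerm_zero, gegenbauerTerm_zero ▸ neg_lt_zero.2 (by positivity),
    summable_gegenbauerTerm, tsum_gegenbauerTerm_neg⟩
end
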